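/- (Improved geometry bound, cubic variables) For every positive integer d ≥ 3 and every ε > 0 there exists a constant C = C(d, ε) such that the following holds. Let λ > 0 and X ≥ 1 be real, and let c₁, c₂, c₃ and X₁,…,X_d, Y₁,…,Y_d, Z₁,…,Z_d be positive integers that are admissible for (λ, X). Then B_d(c, X, Y, Z) ≤ C · (X^{λ+ε} / (P₁P₃) + X^{λ−1+ε} · P₃²). -/

import Mathlib

/-- `dyadic x X` means `x ∈ [X, 2X)`. -/
def dyadic (x X : ℕ) : Prop := X ≤ x ∧ x < 2 * X

/-- `B d c₁ c₂ c₃ Xs Ys Zs` counts tuples `(x, y, z) ∈ ℕ^{3d}` with `x i ∼ Xs i`,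
`y i ∼ Ys i`, `z i ∼ Zs i`, satisfying `c₁ ∏ xᵢ^i + c₂ ∏ yᵢ^i = c₃ ∏ zᵢ^i` and
`gcd(c₁ ∏ xᵢ, c₂ ∏ yᵢ, c₃ ∏ zᵢ) = 1` (indices run through `1, …, d`). -/
noncomputable def B (d : ℕ) (c₁ c₂ c₃ : ℕ) (Xs Ys Zs : Fin d → ℕ) : ℕ :=
  Nat.card {t : (Fin d → ℕ) × (Fin d → ℕ) × (Fin d → ℕ) //
    (∀ i, dyadic (t.1 i) (Xs i)) ∧ (∀ i, dyadic (t.2.1 i) (Ys i)) ∧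
    (∀ i, dyadic (t.2.2 i) (Zs i)) ∧
    c₁ * ∏ i, t.1 i ^ (i.val + 1) + c₂ * ∏ i, t.2.1 i ^ (i.val + 1)
      = c₃ * ∏ i, t.2.2 i ^ (i.val + 1) ∧
    Nat.gcd (c₁ * ∏ i, t.1 i) (Nat.gcd (c₂ * ∏ i, t.2.1 i) (c₃ * ∏ i, t.2.2 i)) = 1}

/-- The parameters are admissible for `(lam, X)`: all are positive,
`∏ᵢ XᵢYᵢZᵢ ∈ [X^lam, 2X^lam)` and `max(∏ Xᵢ^i, ∏ Yᵢ^i, ∏ Zᵢ^i) ∈ [X, 2X)`. -/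
def Admissible (d : ℕ) (lam X : ℝ) (c₁ c₂ c₃ : ℕ) (Xs Ys Zs : Fin d → ℕ) : Prop :=
  0 < c₁ ∧ 0 < c₂ ∧ 0 < c₃ ∧
  (∀ i, 0 < Xs i) ∧ (∀ i, 0 < Ys i) ∧ (∀ i, 0 < Zs i) ∧
  X ^ lam ≤ ((∏ i, Xs i * Ys i * Zs i : ℕ) : ℝ) ∧
  ((∏ i, Xs i * Ys i * Zs i : ℕ) : ℝ) < 2 * X ^ lam ∧
  X ≤ ((max (∏ i, Xs i ^ (i.val + 1))
        (max (∏ i, Ys i ^ (i.val + 1)) (∏ i, Zs i ^ (i.val + 1))) : ℕ) : ℝ) ∧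
  ((max (∏ i, Xs i ^ (i.val + 1))
        (max (∏ i, Ys i ^ (i.val + 1)) (∏ i, Zs i ^ (i.val + 1))) : ℕ) : ℝ) < 2 * X


/-!
Fix two distinct indices `i, j` (for the theorem: the exponents `1` and `3`) and all the other
variables; there are at most `∏_{l ≠ i, j} P_l ≤ 2 X^λ / (P_i P_j)` such choices. Each turns the
equation into `α u + β v = γ w` with `u = x_i^i x_j^j ≍ A = X_i^i X_j^j`, `v ≍ B`, `w ≍ C`,
`gcd(α, γ) = 1` and `gcd(u, v, w) = 1`. Fixing one such solution `(u₀, v₀, w₀)`, the integer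
`(u v₀ - v u₀) / γ` and `⌊w / w₀⌋` determine `(u, v, w)`, because `w₀` divides `(w - w') u₀`,
`(w - w') v₀` and `(w - w') w₀`. Hence there are `≪ A B / γ + 1 ≪ A B C / X + 1` triples
`(u, v, w)`, as `γ w ≥ X`. A triple determines the variables up to the divisors `x_j ∣ u`,
`y_j ∣ v`, `z_j ∣ w`, which cost `X^ε` by the divisor bound. Altogether
`B ≪ X^ε · X^λ / (P_i P_j) · (P_i^i P_j^j / X + 1)`.
-/

open Finset

theorem dvd_of_dvd_mul_of_isCoprime_gcd {α : Type*} [CommRing α] [IsDomain α] [GCDMonoid α]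
    {w u v k : α} (h : IsCoprime w (gcd u v)) (hu : w ∣ k * u) (hv : w ∣ k * v) : w ∣ k :=
  h.dvd_of_dvd_mul_right ((dvd_gcd hu hv).trans (_root_.gcd_mul_left' k u v).dvd)

theorem eq_of_cross_eq {α β γ u v w u' v' w' u₀ v₀ w₀ : ℤ} (hγ : γ ≠ 0)
    (h : α * u + β * v = γ * w) (h' : α * u' + β * v' = γ * w')
    (h₀ : α * u₀ + β * v₀ = γ * w₀) (hprim : IsCoprime w₀ (gcd u₀ v₀))
    (hcross : u * v₀ - v * u₀ = u' * v₀ - v' * u₀) (hw : |w - w'| < w₀) :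
    u = u' ∧ v = v' ∧ w = w' := by
  have hu : (w - w') * u₀ = w₀ * (u - u') := mul_left_cancel₀ hγ (by
    linear_combination -u₀ * h + u₀ * h' + (u - u') * h₀ - β * hcross)
  have hv : (w - w') * v₀ = w₀ * (v - v') := mul_left_cancel₀ hγ (by
    linear_combination -v₀ * h + v₀ * h' + (v - v') * h₀ + α * hcross)
  have hww : w - w' = 0 := Int.eq_zero_of_abs_lt_dvd
    (dvd_of_dvd_mul_of_isCoprime_gcd hprim ⟨_, hu⟩ ⟨_, hv⟩) hw
  have hw₀ : w₀ ≠ 0 := (lt_of_le_of_lt (abs_nonneg _) hw).ne'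
  rw [hww, zero_mul, eq_comm, mul_eq_zero] at hu hv
  refine ⟨?_, ?_, ?_⟩ <;> grind

theorem Int.mem_Icc_ediv_of_dvd {x γ n : ℤ} (hγ : 0 < γ) (hdvd : γ ∣ x) (hx : |x| ≤ n) :
    x / γ ∈ Icc (-(n / γ)) (n / γ) := by
  rw [abs_le] at hx
  rw [mem_Icc, neg_le, ← Int.neg_ediv_of_dvd hdvd]
  exact ⟨Int.ediv_le_ediv hγ (by linarith), Int.ediv_le_ediv hγ hx.2⟩

theorem Int.abs_sub_lt_of_div_eq {a b n : ℕ} (hn : 0 < n) (h : a / n = b / n) :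
    |(a : ℤ) - b| < n := by
  have ha := Nat.div_add_mod a n
  have hb := Nat.div_add_mod b n
  rw [h] at ha
  have : (a : ℤ) - b = (a % n : ℕ) - (b % n : ℕ) := by omega
  rw [this]
  exact abs_sub_lt_of_lt_lt (Nat.mod_lt _ hn) (Nat.mod_lt _ hn)

theorem isCoprime_gcd_of_gcd_eq_one {u v w : ℕ} (h : Nat.gcd u (Nat.gcd v w) = 1) :
    IsCoprime (w : ℤ) (gcd (u : ℤ) v) := by
  rw [Int.isCoprime_iff_gcd_eq_one, ← Int.coe_gcd, Int.gcd_natCast_natCast,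
    Int.gcd_natCast_natCast, Nat.gcd_comm, Nat.gcd_assoc, h]

theorem card_primitive_solutions_le {α β γ a b c m : ℕ} (hγ : 0 < γ) (hαγ : α.Coprime γ)
    (hc : 0 < c) {S : Finset (ℕ × ℕ × ℕ)}
    (heq : ∀ s ∈ S, α * s.1 + β * s.2.1 = γ * s.2.2)
    (hprim : ∀ s ∈ S, Nat.gcd s.1 (Nat.gcd s.2.1 s.2.2) = 1)
    (hbox : ∀ s ∈ S, s.1 ≤ a ∧ s.2.1 ≤ b ∧ c ≤ s.2.2 ∧ s.2.2 ≤ m * c) :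
    #S ≤ (2 * (a * b / γ) + 1) * (m + 1) := by
  obtain rfl | ⟨⟨u₀, v₀, w₀⟩, hs₀⟩ := S.eq_empty_or_nonempty
  · simp
  have heqℤ : ∀ s ∈ S, (α : ℤ) * s.1 + β * s.2.1 = γ * s.2.2 := fun s hs ↦ by
    exact_mod_cast heq s hs
  have hw₀ : 0 < w₀ := hc.trans_le (hbox _ hs₀).2.2.1
  have hdvd : ∀ s ∈ S, (γ : ℤ) ∣ s.1 * v₀ - s.2.1 * u₀ := fun s hs ↦ by
    have hα : IsCoprime (γ : ℤ) α := Nat.isCoprime_iff_coprime.mpr hαγ.symm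
    exact hα.dvd_of_dvd_mul_left ⟨s.2.2 * v₀ - w₀ * s.2.1, by
      linear_combination v₀ * heqℤ s hs - s.2.1 * heqℤ _ hs₀⟩
  let key : ℕ × ℕ × ℕ → ℤ × ℕ := fun s ↦ ((s.1 * v₀ - s.2.1 * u₀ : ℤ) / γ, s.2.2 / w₀)
  calc #S ≤ #(Icc (-((a * b / γ : ℕ) : ℤ)) (a * b / γ : ℕ) ×ˢ range (m + 1)) := by
        refine card_le_card_of_injOn key (fun s hs ↦ ?_) (fun s hs s' hs' hss' ↦ ?_)
        · have hs₁ := hbox s hs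
          have hs₀' := hbox _ hs₀
          have hx : |(s.1 * v₀ - s.2.1 * u₀ : ℤ)| ≤ (a * b : ℕ) := by
            have h1 : s.1 * v₀ ≤ a * b := Nat.mul_le_mul hs₁.1 hs₀'.2.1
            have h2 : s.2.1 * u₀ ≤ a * b := mul_comm a b ▸ Nat.mul_le_mul hs₁.2.1 hs₀'.1
            exact abs_sub_le_of_nonneg_of_le (by positivity) (by exact_mod_cast h1)
              (by positivity) (by exact_mod_cast h2)
          rw [mem_coe, mem_product, mem_range, Nat.lt_succ_iff, Int.natCast_div]
          refine ⟨Int.mem_Icc_ediv_of_dvd (by exact_mod_cast hγ) (hdvd s hs) hx,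
            Nat.div_le_of_le_mul ?_⟩
          calc s.2.2 ≤ m * c := hs₁.2.2.2
            _ ≤ w₀ * m := by rw [mul_comm]; exact Nat.mul_le_mul_right m hs₀'.2.2.1
        · obtain ⟨hcross, hw⟩ := Prod.mk.inj hss'
          have hcross' := Int.ediv_mul_cancel (hdvd s hs)
          rw [hcross, Int.ediv_mul_cancel (hdvd s' hs')] at hcross'
          obtain ⟨h1, h2, h3⟩ := eq_of_cross_eq (by exact_mod_cast hγ.ne') (heqℤ s hs)
            (heqℤ s' hs') (heqℤ _ hs₀) (isCoprime_gcd_of_gcd_eq_one (hprim _ hs₀))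
            hcross'.symm (by exact_mod_cast Int.abs_sub_lt_of_div_eq hw₀ hw)
          exact Prod.ext (by exact_mod_cast h1)
            (Prod.ext (by exact_mod_cast h2) (by exact_mod_cast h3))
    _ = (2 * (a * b / γ) + 1) * (m + 1) := by
        rw [card_product, Int.card_Icc, card_range]
        congr 1
        omega

theorem succ_le_mul_pow {r : ℝ} (hr : 1 < r) (e : ℕ) :
    (e + 1 : ℝ) ≤ max 1 (r - 1)⁻¹ * r ^ e := by
  have hκ : 1 ≤ max 1 (r - 1)⁻¹ * (r - 1) :=
    calc (1 : ℝ) = (r - 1)⁻¹ * (r - 1) := (inv_mul_cancel₀ (by linarith)).symm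
      _ ≤ _ := by gcongr; exact le_max_right _ _
  calc (e + 1 : ℝ) ≤ max 1 (r - 1)⁻¹ * (1 + e * (r - 1)) := by
        nlinarith [le_max_left 1 (r - 1)⁻¹, (e.cast_nonneg : (0 : ℝ) ≤ e)]
    _ ≤ max 1 (r - 1)⁻¹ * r ^ e := by
        gcongr
        exact one_add_mul_sub_le_pow (by linarith) e

-- Only the primes `p < 2 ^ δ⁻¹` need a constant: for the others `2 ≤ p ^ δ` and `e + 1 ≤ 2 ^ e`.
theorem succ_le_mul_pow_rpow {δ : ℝ} (hδ : 0 < δ) {p : ℕ} (hp : 2 ≤ p) (e : ℕ) :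
    (e + 1 : ℝ) ≤
      (if p < ⌈(2 : ℝ) ^ δ⁻¹⌉₊ then max 1 ((2 : ℝ) ^ δ - 1)⁻¹ else 1) * ((p : ℝ) ^ e) ^ δ := by
  have hp' : (2 : ℝ) ≤ p := by exact_mod_cast hp
  rw [← Real.rpow_pow_comm (by positivity)]
  split_ifs with h
  · calc (e + 1 : ℝ) ≤ max 1 ((2 : ℝ) ^ δ - 1)⁻¹ * ((2 : ℝ) ^ δ) ^ e :=
          succ_le_mul_pow (Real.one_lt_rpow (by norm_num) hδ) e
      _ ≤ _ := by gcongr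
  · have h2 : (2 : ℝ) ≤ (p : ℝ) ^ δ :=
      calc (2 : ℝ) = ((2 : ℝ) ^ δ⁻¹) ^ δ := by
            rw [← Real.rpow_mul (by norm_num), inv_mul_cancel₀ hδ.ne', Real.rpow_one]
        _ ≤ (p : ℝ) ^ δ := by
            gcongr
            exact (Nat.le_ceil _).trans (by exact_mod_cast not_lt.mp h)
    calc (e + 1 : ℝ) ≤ 2 ^ e := by exact_mod_cast Nat.lt_two_pow_self
      _ ≤ 1 * ((p : ℝ) ^ δ) ^ e := by rw [one_mul]; gcongr

theorem card_divisors_le_mul_rpow {δ : ℝ} (hδ : 0 < δ) :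
    ∃ K : ℝ, ∀ n : ℕ, n ≠ 0 → (#n.divisors : ℝ) ≤ K * (n : ℝ) ^ δ := by
  set L := ⌈(2 : ℝ) ^ δ⁻¹⌉₊
  set κ := max 1 ((2 : ℝ) ^ δ - 1)⁻¹
  refine ⟨κ ^ L, fun n hn ↦ ?_⟩
  have hn' : (n : ℝ) ^ δ = ∏ p ∈ n.primeFactors, ((p : ℝ) ^ n.factorization p) ^ δ := by
    conv_lhs => rw [Nat.prod_primeFactors_pow_factorization hn]
    push_cast
    exact (Real.finsetProd_rpow _ _ (fun _ _ ↦ by positivity) _).symm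
  rw [Nat.card_divisors hn, hn']
  push_cast
  calc ∏ p ∈ n.primeFactors, ((n.factorization p : ℝ) + 1)
      ≤ ∏ p ∈ n.primeFactors, (if p < L then κ else 1) * ((p : ℝ) ^ n.factorization p) ^ δ :=
        prod_le_prod (fun _ _ ↦ by positivity) fun p hp ↦
          succ_le_mul_pow_rpow hδ (Nat.prime_of_mem_primeFactors hp).two_le _
    _ = κ ^ #{p ∈ n.primeFactors | p < L} *
          ∏ p ∈ n.primeFactors, ((p : ℝ) ^ n.factorization p) ^ δ := by
        rw [prod_mul_distrib, prod_ite, prod_const, prod_const_one, mul_one]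
    _ ≤ κ ^ L * ∏ p ∈ n.primeFactors, ((p : ℝ) ^ n.factorization p) ^ δ := by
        gcongr
        · exact le_max_left _ _
        · exact (card_le_card fun p hp ↦ mem_range.mpr (mem_filter.mp hp).2).trans
            (card_range L).le

section DyadicBox

variable {ι : Type*} [Fintype ι] [DecidableEq ι]

def dyadicBox (X : ι → ℕ) : Finset (ι → ℕ) := Fintype.piFinset fun i ↦ Ico (X i) (2 * X i)

theorem mem_dyadicBox {X f : ι → ℕ} : f ∈ dyadicBox X ↔ ∀ i, dyadic (f i) (X i) := by
  simp [dyadicBox, dyadic]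

theorem pos_of_mem_dyadicBox {X f : ι → ℕ} (hf : f ∈ dyadicBox X) (i : ι) : 0 < X i := by
  have := mem_dyadicBox.mp hf i; unfold dyadic at this; omega

theorem pos_apply_of_mem_dyadicBox {X f : ι → ℕ} (hf : f ∈ dyadicBox X) (i : ι) : 0 < f i :=
  (pos_of_mem_dyadicBox hf i).trans_le (mem_dyadicBox.mp hf i).1

theorem prod_pow_eq_mul_prod_piecewise_one {M : Type*} [CommMonoid M] (s : Finset ι)
    (e : ι → ℕ) (f : ι → M) :
    ∏ i, f i ^ e i = (∏ i ∈ s, f i ^ e i) * ∏ i, s.piecewise (1 : ι → M) f i ^ e i := by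
  have : ∏ i, s.piecewise (1 : ι → M) f i ^ e i = ∏ i ∈ sᶜ, f i ^ e i := by
    rw [← prod_compl_mul_prod s]
    simp +contextual only [piecewise_eq_of_mem, Pi.one_apply, one_pow, prod_const_one, mul_one]
    exact prod_congr rfl fun i hi ↦ by rw [piecewise_eq_of_notMem _ _ _ (mem_compl.mp hi)]
  rw [this, prod_mul_prod_compl]

theorem card_image_piecewise_one_dyadicBox_le (s : Finset ι) (X : ι → ℕ) :
    #((dyadicBox X).image fun f ↦ s.piecewise (1 : ι → ℕ) f) ≤ ∏ i ∈ sᶜ, X i := by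
  calc #((dyadicBox X).image fun f ↦ s.piecewise (1 : ι → ℕ) f)
      ≤ #(Fintype.piFinset (s.piecewise (fun _ ↦ ({1} : Finset ℕ))
          fun i ↦ Ico (X i) (2 * X i))) := by
        refine card_le_card (image_subset_iff.mpr fun f hf ↦ ?_)
        rw [dyadicBox, Fintype.mem_piFinset] at hf
        rw [Fintype.mem_piFinset]
        intro i
        by_cases hi : i ∈ s <;> simp [hi, hf i]
    _ = ∏ i ∈ sᶜ, X i := by
        rw [Fintype.card_piFinset, ← prod_compl_mul_prod s]
        simp +contextual only [piecewise_eq_of_mem, card_singleton, prod_const_one, mul_one]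
        exact prod_congr rfl fun i hi ↦ by
          rw [piecewise_eq_of_notMem _ _ _ (mem_compl.mp hi), Nat.card_Ico]; omega

theorem prod_le_prod_of_mem_dyadicBox {X f : ι → ℕ} (hf : f ∈ dyadicBox X) (s : Finset ι)
    (e : ι → ℕ) : ∏ i ∈ s, X i ^ e i ≤ ∏ i ∈ s, f i ^ e i :=
  prod_le_prod' fun i _ ↦ Nat.pow_le_pow_left (mem_dyadicBox.mp hf i).1 _

theorem prod_le_two_pow_mul_of_mem_dyadicBox {X f : ι → ℕ} (hf : f ∈ dyadicBox X)
    (s : Finset ι) (e : ι → ℕ) :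
    ∏ i ∈ s, f i ^ e i ≤ 2 ^ (∑ i ∈ s, e i) * ∏ i ∈ s, X i ^ e i := by
  rw [← prod_pow_eq_pow_sum, ← prod_mul_distrib]
  exact prod_le_prod' fun i _ ↦ by
    rw [← mul_pow]; exact Nat.pow_le_pow_left (mem_dyadicBox.mp hf i).2.le _

end DyadicBox

theorem mul_prod_pow_dvd_pow {ι : Type*} [Fintype ι] (c : ℕ) (f e : ι → ℕ) {n : ℕ}
    (hn : ∀ i, e i ≤ n) : c * ∏ i, f i ^ e i ∣ (c * ∏ i, f i) ^ (n + 1) := by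
  rw [mul_pow, ← prod_pow]
  exact mul_dvd_mul (dvd_pow_self c n.succ_ne_zero)
    (prod_dvd_prod_of_dvd _ _ fun i _ ↦ pow_dvd_pow _ ((hn i).trans n.le_succ))

theorem coprime_of_add_eq_of_dvd_pow {A B C a b c n : ℕ} (h : A + B = C) (hA : A ∣ a ^ n)
    (hB : B ∣ b ^ n) (hC : C ∣ c ^ n) (habc : Nat.gcd a (Nat.gcd b c) = 1) : A.Coprime C := by
  refine Nat.coprime_of_dvd fun p hp hpA hpC ↦ hp.one_lt.ne' (Nat.dvd_one.mp ?_)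
  have hpB : p ∣ B := by simpa [← h] using Nat.dvd_sub hpC hpA
  rw [← habc]
  exact Nat.dvd_gcd (hp.dvd_of_dvd_pow (hpA.trans hA))
    (Nat.dvd_gcd (hp.dvd_of_dvd_pow (hpB.trans hB)) (hp.dvd_of_dvd_pow (hpC.trans hC)))

section WeightedProd

variable {d : ℕ}

-- `Fin d` is `0`-based: the variable `f i` carries the exponent `i + 1`.
def weightedProd (s : Finset (Fin d)) (f : Fin d → ℕ) : ℕ := ∏ i ∈ s, f i ^ (i.val + 1)

def weightSum (s : Finset (Fin d)) : ℕ := ∑ i ∈ s, (i.val + 1)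

theorem weightedProd_pos {f : Fin d → ℕ} (hf : ∀ i, 0 < f i) (s : Finset (Fin d)) :
    0 < weightedProd s f :=
  prod_pos fun i _ ↦ pow_pos (hf i) _

theorem weightedProd_mul (s : Finset (Fin d)) (f g : Fin d → ℕ) :
    weightedProd s (fun l ↦ f l * g l) = weightedProd s f * weightedProd s g := by
  simp only [weightedProd, mul_pow, prod_mul_distrib]

theorem weightedProd_univ_eq (s : Finset (Fin d)) (f : Fin d → ℕ) :
    weightedProd univ f = weightedProd s f * weightedProd univ (s.piecewise 1 f) :=
  prod_pow_eq_mul_prod_piecewise_one s _ f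

theorem mul_weightedProd_eq_of_piecewise_eq {s : Finset (Fin d)} {f g : Fin d → ℕ}
    (h : s.piecewise 1 f = g) (c : ℕ) :
    c * weightedProd univ f = c * weightedProd univ g * weightedProd s f := by
  rw [weightedProd_univ_eq s f, h]; ring

theorem weightedProd_le_weightedProd_univ {f : Fin d → ℕ} (hf : ∀ i, 0 < f i)
    (s : Finset (Fin d)) : weightedProd s f ≤ weightedProd univ f := by
  rw [weightedProd_univ_eq s]
  exact Nat.le_mul_of_pos_right _ (weightedProd_pos (fun i ↦ by
    by_cases hi : i ∈ s <;> simp [hi, hf i]) _)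

theorem weightedProd_le_of_mem_dyadicBox {X f : Fin d → ℕ} (hf : f ∈ dyadicBox X)
    (s : Finset (Fin d)) : weightedProd s X ≤ weightedProd s f :=
  prod_le_prod_of_mem_dyadicBox hf s _

theorem weightedProd_le_two_pow_mul_of_mem_dyadicBox {X f : Fin d → ℕ} (hf : f ∈ dyadicBox X)
    (s : Finset (Fin d)) : weightedProd s f ≤ 2 ^ weightSum s * weightedProd s X :=
  prod_le_two_pow_mul_of_mem_dyadicBox hf s _

theorem weightedProd_le_two_pow_mul_weightedProd_univ {X f : Fin d → ℕ}
    (hf : f ∈ dyadicBox X) (s : Finset (Fin d)) :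
    weightedProd s f ≤ 2 ^ weightSum s * weightedProd univ X :=
  (weightedProd_le_two_pow_mul_of_mem_dyadicBox hf s).trans
    (Nat.mul_le_mul_left _ (weightedProd_le_weightedProd_univ (pos_of_mem_dyadicBox hf) s))

theorem eq_of_piecewise_eq_of_weightedProd_eq {i j : Fin d} (hij : i ≠ j) {f g : Fin d → ℕ}
    (hrest : ({i, j} : Finset (Fin d)).piecewise 1 f = ({i, j} : Finset (Fin d)).piecewise 1 g)
    (hprod : weightedProd {i, j} f = weightedProd {i, j} g) (hj : f j = g j) (hfj : 0 < f j) :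
    f = g := by
  funext l
  by_cases hl : l ∈ ({i, j} : Finset (Fin d))
  · rcases mem_insert.mp hl with rfl | hl
    · rw [weightedProd, weightedProd, prod_pair hij, prod_pair hij, hj] at hprod
      exact Nat.pow_left_injective l.val.succ_ne_zero
        (Nat.eq_of_mul_eq_mul_right (pow_pos (hj ▸ hfj) _) hprod)
    · rwa [mem_singleton.mp hl]
  · simpa [piecewise_eq_of_notMem _ _ _ hl] using congrFun hrest l

end WeightedProd

abbrev Triple (d : ℕ) : Type := (Fin d → ℕ) × (Fin d → ℕ) × (Fin d → ℕ)

section Solutions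

variable {d : ℕ} {c₁ c₂ c₃ : ℕ} {Xs Ys Zs : Fin d → ℕ}

def solutions (c₁ c₂ c₃ : ℕ) (Xs Ys Zs : Fin d → ℕ) : Finset (Triple d) :=
  {t ∈ dyadicBox Xs ×ˢ dyadicBox Ys ×ˢ dyadicBox Zs |
    c₁ * weightedProd univ t.1 + c₂ * weightedProd univ t.2.1 = c₃ * weightedProd univ t.2.2 ∧
    Nat.gcd (c₁ * ∏ i, t.1 i) (Nat.gcd (c₂ * ∏ i, t.2.1 i) (c₃ * ∏ i, t.2.2 i)) = 1}

-- The variables indexed by `s` are replaced by `1`, so that `weightedProd univ` of a component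
-- of `restPart s t` is the weighted product over `sᶜ`.
def restPart (s : Finset (Fin d)) (t : Triple d) : Triple d :=
  (s.piecewise 1 t.1, s.piecewise 1 t.2.1, s.piecewise 1 t.2.2)

def corePart (s : Finset (Fin d)) (t : Triple d) : ℕ × ℕ × ℕ :=
  (weightedProd s t.1, weightedProd s t.2.1, weightedProd s t.2.2)

theorem B_eq_card_solutions (c₁ c₂ c₃ : ℕ) (Xs Ys Zs : Fin d → ℕ) :
    B d c₁ c₂ c₃ Xs Ys Zs = #(solutions c₁ c₂ c₃ Xs Ys Zs) := by
  rw [B, ← Nat.card_eq_finsetCard]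
  exact Nat.card_congr <| Equiv.subtypeEquivRight fun t ↦ by
    rw [solutions, mem_filter, mem_product, mem_product, mem_dyadicBox, mem_dyadicBox,
      mem_dyadicBox]
    simp only [weightedProd, and_assoc]

theorem mem_dyadicBox_of_mem_solutions {t : Triple d} (ht : t ∈ solutions c₁ c₂ c₃ Xs Ys Zs) :
    t.1 ∈ dyadicBox Xs ∧ t.2.1 ∈ dyadicBox Ys ∧ t.2.2 ∈ dyadicBox Zs := by
  simpa only [mem_product] using (mem_filter.mp ht).1

theorem pos_of_mem_solutions {t : Triple d} (ht : t ∈ solutions c₁ c₂ c₃ Xs Ys Zs) (l : Fin d) :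
    0 < t.1 l ∧ 0 < t.2.1 l ∧ 0 < t.2.2 l :=
  have h := mem_dyadicBox_of_mem_solutions ht
  ⟨pos_apply_of_mem_dyadicBox h.1 l, pos_apply_of_mem_dyadicBox h.2.1 l,
    pos_apply_of_mem_dyadicBox h.2.2 l⟩

theorem coprime_of_mem_solutions {t : Triple d} (ht : t ∈ solutions c₁ c₂ c₃ Xs Ys Zs) :
    (c₁ * weightedProd univ t.1).Coprime (c₃ * weightedProd univ t.2.2) := by
  obtain ⟨-, heq, hgcd⟩ := mem_filter.mp ht
  exact coprime_of_add_eq_of_dvd_pow heq (mul_prod_pow_dvd_pow _ _ _ fun i ↦ i.isLt)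
    (mul_prod_pow_dvd_pow _ _ _ fun i ↦ i.isLt) (mul_prod_pow_dvd_pow _ _ _ fun i ↦ i.isLt) hgcd

theorem max_weightedProd_le_of_mem_solutions (hc₁ : 0 < c₁) (hc₂ : 0 < c₂) (hc₃ : 0 < c₃)
    {t : Triple d} (ht : t ∈ solutions c₁ c₂ c₃ Xs Ys Zs) :
    max (weightedProd univ Xs) (max (weightedProd univ Ys) (weightedProd univ Zs)) ≤
      c₃ * weightedProd univ t.2.2 := by
  obtain ⟨hx, hy, hz⟩ := mem_dyadicBox_of_mem_solutions ht
  have heq := (mem_filter.mp ht).2.1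
  have h₁ := Nat.le_mul_of_pos_left (weightedProd univ t.1) hc₁
  have h₂ := Nat.le_mul_of_pos_left (weightedProd univ t.2.1) hc₂
  have h₃ := Nat.le_mul_of_pos_left (weightedProd univ t.2.2) hc₃
  have := weightedProd_le_of_mem_dyadicBox hx univ
  have := weightedProd_le_of_mem_dyadicBox hy univ
  have := weightedProd_le_of_mem_dyadicBox hz univ
  exact max_le (by omega) (max_le (by omega) (by omega))

theorem mul_weightedProd_eq_of_restPart_eq {s : Finset (Fin d)} {t r : Triple d}
    (hr : restPart s t = r) (c : ℕ) :
    c * weightedProd univ t.1 = c * weightedProd univ r.1 * weightedProd s t.1 ∧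
    c * weightedProd univ t.2.1 = c * weightedProd univ r.2.1 * weightedProd s t.2.1 ∧
    c * weightedProd univ t.2.2 = c * weightedProd univ r.2.2 * weightedProd s t.2.2 := by
  simp only [restPart, Prod.ext_iff] at hr
  exact ⟨mul_weightedProd_eq_of_piecewise_eq hr.1 c, mul_weightedProd_eq_of_piecewise_eq hr.2.1 c,
    mul_weightedProd_eq_of_piecewise_eq hr.2.2 c⟩

theorem corePart_eq_of_mem_solutions {s : Finset (Fin d)} {t r : Triple d}
    (ht : t ∈ solutions c₁ c₂ c₃ Xs Ys Zs) (hr : restPart s t = r) :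
    c₁ * weightedProd univ r.1 * weightedProd s t.1 +
      c₂ * weightedProd univ r.2.1 * weightedProd s t.2.1 =
        c₃ * weightedProd univ r.2.2 * weightedProd s t.2.2 := by
  rw [← (mul_weightedProd_eq_of_restPart_eq hr c₁).1,
    ← (mul_weightedProd_eq_of_restPart_eq hr c₂).2.1,
    ← (mul_weightedProd_eq_of_restPart_eq hr c₃).2.2]
  exact (mem_filter.mp ht).2.1

theorem card_image_restPart_le (s : Finset (Fin d)) :
    #((solutions c₁ c₂ c₃ Xs Ys Zs).image (restPart s)) ≤ ∏ l ∈ sᶜ, Xs l * Ys l * Zs l := by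
  calc #((solutions c₁ c₂ c₃ Xs Ys Zs).image (restPart s))
      ≤ #((dyadicBox Xs).image (fun f ↦ s.piecewise 1 f) ×ˢ
          (dyadicBox Ys).image (fun f ↦ s.piecewise 1 f) ×ˢ
          (dyadicBox Zs).image (fun f ↦ s.piecewise 1 f)) := by
        refine card_le_card (image_subset_iff.mpr fun t ht ↦ ?_)
        obtain ⟨hx, hy, hz⟩ := mem_dyadicBox_of_mem_solutions ht
        simp only [restPart, mem_product, mem_image]
        exact ⟨⟨_, hx, rfl⟩, ⟨_, hy, rfl⟩, ⟨_, hz, rfl⟩⟩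
    _ ≤ ∏ l ∈ sᶜ, Xs l * Ys l * Zs l := by
        rw [card_product, card_product, prod_mul_distrib, prod_mul_distrib, ← mul_assoc]
        gcongr <;> exact card_image_piecewise_one_dyadicBox_le s _

end Solutions

section Fibres

variable {d : ℕ} {c₁ c₂ c₃ : ℕ} {Xs Ys Zs : Fin d → ℕ}

theorem card_le_pow_mul_card_image_corePart {i j : Fin d} (hij : i ≠ j) {F : Finset (Triple d)}
    {r : Triple d} (hrest : ∀ t ∈ F, restPart {i, j} t = r)
    (hpos : ∀ t ∈ F, ∀ l, 0 < t.1 l ∧ 0 < t.2.1 l ∧ 0 < t.2.2 l) {T : ℕ}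
    (hT : ∀ t ∈ F, #(weightedProd {i, j} t.1).divisors ≤ T ∧
      #(weightedProd {i, j} t.2.1).divisors ≤ T ∧ #(weightedProd {i, j} t.2.2).divisors ≤ T) :
    #F ≤ T ^ 3 * #(F.image (corePart {i, j})) := by
  refine card_le_mul_card_image F _ fun b hb ↦ ?_
  obtain ⟨t₀, ht₀, rfl⟩ := mem_image.mp hb
  have hdvd (f : Fin d → ℕ) : f j ∣ weightedProd {i, j} f :=
    (dvd_pow_self _ j.val.succ_ne_zero).trans (dvd_prod_of_mem _ (by simp))
  have hne (f : Fin d → ℕ) (hf : ∀ l, 0 < f l) : weightedProd {i, j} f ≠ 0 :=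
    (weightedProd_pos hf _).ne'
  calc #{t ∈ F | corePart {i, j} t = corePart {i, j} t₀}
      ≤ #((weightedProd {i, j} t₀.1).divisors ×ˢ (weightedProd {i, j} t₀.2.1).divisors ×ˢ
          (weightedProd {i, j} t₀.2.2).divisors) := by
        refine card_le_card_of_injOn (fun t ↦ (t.1 j, t.2.1 j, t.2.2 j)) (fun t ht ↦ ?_)
          (fun t ht t' ht' htt' ↦ ?_)
        · obtain ⟨-, hcore⟩ := mem_filter.mp ht
          simp only [corePart, Prod.mk.injEq] at hcore
          simp only [coe_product, Set.mem_prod, mem_coe, Nat.mem_divisors]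
          exact ⟨⟨hcore.1 ▸ hdvd t.1, hne _ fun l ↦ (hpos t₀ ht₀ l).1⟩,
            ⟨hcore.2.1 ▸ hdvd t.2.1, hne _ fun l ↦ (hpos t₀ ht₀ l).2.1⟩,
            ⟨hcore.2.2 ▸ hdvd t.2.2, hne _ fun l ↦ (hpos t₀ ht₀ l).2.2⟩⟩
        · obtain ⟨htF, hcore⟩ := mem_filter.mp ht
          obtain ⟨htF', hcore'⟩ := mem_filter.mp ht'
          have hr := (hrest t htF).trans (hrest t' htF').symm
          simp only [corePart, restPart, Prod.mk.injEq] at hcore hcore' hr htt'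
          exact Prod.ext
            (eq_of_piecewise_eq_of_weightedProd_eq hij hr.1 (hcore.1.trans hcore'.1.symm) htt'.1
              (hpos t htF j).1)
            (Prod.ext
              (eq_of_piecewise_eq_of_weightedProd_eq hij hr.2.1 (hcore.2.1.trans hcore'.2.1.symm)
                htt'.2.1 (hpos t htF j).2.1)
              (eq_of_piecewise_eq_of_weightedProd_eq hij hr.2.2 (hcore.2.2.trans hcore'.2.2.symm)
                htt'.2.2 (hpos t htF j).2.2))
    _ ≤ T ^ 3 := by
        obtain ⟨h₁, h₂, h₃⟩ := hT t₀ ht₀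
        rw [card_product, card_product, pow_three]
        exact Nat.mul_le_mul h₁ (Nat.mul_le_mul h₂ h₃)

theorem card_image_corePart_le (hc₃ : 0 < c₃) (s : Finset (Fin d)) (r : Triple d) :
    #({t ∈ solutions c₁ c₂ c₃ Xs Ys Zs | restPart s t = r}.image (corePart s)) ≤
      (2 * (2 ^ weightSum s * weightedProd s Xs * (2 ^ weightSum s * weightedProd s Ys) /
        (c₃ * weightedProd univ r.2.2)) + 1) * (2 ^ weightSum s + 1) := by
  set F := {t ∈ solutions c₁ c₂ c₃ Xs Ys Zs | restPart s t = r}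
  obtain hF | ⟨t₀, ht₀⟩ := F.eq_empty_or_nonempty
  · simp [hF]
  have hcop {t} (ht : t ∈ F) : (c₁ * weightedProd univ r.1 * weightedProd s t.1).Coprime
      (c₃ * weightedProd univ r.2.2 * weightedProd s t.2.2) := by
    obtain ⟨htS, hr⟩ := mem_filter.mp ht
    rw [← (mul_weightedProd_eq_of_restPart_eq hr c₁).1,
      ← (mul_weightedProd_eq_of_restPart_eq hr c₃).2.2]
    exact coprime_of_mem_solutions htS
  obtain ⟨ht₀S, ht₀r⟩ := mem_filter.mp ht₀
  have hγ : 0 < c₃ * weightedProd univ r.2.2 := Nat.pos_of_mul_pos_right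
    ((mul_weightedProd_eq_of_restPart_eq ht₀r c₃).2.2 ▸
      Nat.mul_pos hc₃ (weightedProd_pos (fun l ↦ (pos_of_mem_solutions ht₀S l).2.2) _))
  refine card_primitive_solutions_le (β := c₂ * weightedProd univ r.2.1) hγ
    (((hcop ht₀).coprime_dvd_left (dvd_mul_right _ _)).coprime_dvd_right (dvd_mul_right _ _))
    (weightedProd_pos (pos_of_mem_dyadicBox (mem_dyadicBox_of_mem_solutions ht₀S).2.2) s)
    (forall_mem_image.mpr fun t ht ↦ ?_) (forall_mem_image.mpr fun t ht ↦ ?_)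
    (forall_mem_image.mpr fun t ht ↦ ?_)
  · exact corePart_eq_of_mem_solutions (mem_filter.mp ht).1 (mem_filter.mp ht).2
  · exact ((hcop ht).coprime_dvd_left (dvd_mul_left _ _)).coprime_dvd_right
      ((Nat.gcd_dvd_right _ _).trans (dvd_mul_left _ _))
  · obtain ⟨hx, hy, hz⟩ := mem_dyadicBox_of_mem_solutions (mem_filter.mp ht).1
    exact ⟨weightedProd_le_two_pow_mul_of_mem_dyadicBox hx s,
      weightedProd_le_two_pow_mul_of_mem_dyadicBox hy s,
      weightedProd_le_of_mem_dyadicBox hz s, weightedProd_le_two_pow_mul_of_mem_dyadicBox hz s⟩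

theorem max_weightedProd_le_mul_of_restPart_eq (hc₁ : 0 < c₁) (hc₂ : 0 < c₂) (hc₃ : 0 < c₃)
    {s : Finset (Fin d)} {t r : Triple d} (ht : t ∈ solutions c₁ c₂ c₃ Xs Ys Zs)
    (hr : restPart s t = r) :
    max (weightedProd univ Xs) (max (weightedProd univ Ys) (weightedProd univ Zs)) ≤
      c₃ * weightedProd univ r.2.2 * (2 ^ weightSum s * weightedProd s Zs) :=
  calc _ ≤ c₃ * weightedProd univ t.2.2 := max_weightedProd_le_of_mem_solutions hc₁ hc₂ hc₃ ht
    _ = c₃ * weightedProd univ r.2.2 * weightedProd s t.2.2 :=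
        (mul_weightedProd_eq_of_restPart_eq hr c₃).2.2
    _ ≤ _ := Nat.mul_le_mul_left _ (weightedProd_le_two_pow_mul_of_mem_dyadicBox
        (mem_dyadicBox_of_mem_solutions ht).2.2 s)

theorem card_fibre_le {i j : Fin d} (hij : i ≠ j) (hc₁ : 0 < c₁) (hc₂ : 0 < c₂) (hc₃ : 0 < c₃)
    {X : ℝ} (hX : 0 < X)
    (hXM : X ≤ (max (weightedProd univ Xs) (max (weightedProd univ Ys) (weightedProd univ Zs)) : ℕ))
    {T : ℕ} (hT : ∀ t ∈ solutions c₁ c₂ c₃ Xs Ys Zs, #(weightedProd {i, j} t.1).divisors ≤ T ∧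
      #(weightedProd {i, j} t.2.1).divisors ≤ T ∧ #(weightedProd {i, j} t.2.2).divisors ≤ T)
    (r : Triple d) :
    (#{t ∈ solutions c₁ c₂ c₃ Xs Ys Zs | restPart {i, j} t = r} : ℝ) ≤
      T ^ 3 * ((2 * ((2 ^ weightSum {i, j}) ^ 3 * (weightedProd {i, j} Xs *
        weightedProd {i, j} Ys * weightedProd {i, j} Zs) / X) + 1) *
          (2 ^ weightSum {i, j} + 1)) := by
  set s : Finset (Fin d) := {i, j}
  set F := {t ∈ solutions c₁ c₂ c₃ Xs Ys Zs | restPart s t = r}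
  set γ := c₃ * weightedProd univ r.2.2
  obtain hF | ⟨t₀, ht₀⟩ := F.eq_empty_or_nonempty
  · rw [hF, card_empty, Nat.cast_zero]; positivity
  have hγX : X ≤ γ * (2 ^ weightSum s * weightedProd s Zs) := hXM.trans <| by
    exact_mod_cast max_weightedProd_le_mul_of_restPart_eq hc₁ hc₂ hc₃ (mem_filter.mp ht₀).1
      (mem_filter.mp ht₀).2
  have hγ : (0 : ℝ) < γ := pos_of_mul_pos_left (hX.trans_le hγX) (by positivity)
  have hcard : #F ≤ T ^ 3 * ((2 * (2 ^ weightSum s * weightedProd s Xs *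
      (2 ^ weightSum s * weightedProd s Ys) / γ) + 1) * (2 ^ weightSum s + 1)) :=
    (card_le_pow_mul_card_image_corePart hij (fun t ht ↦ (mem_filter.mp ht).2)
      (fun t ht ↦ pos_of_mem_solutions (mem_filter.mp ht).1)
      fun t ht ↦ hT t (mem_filter.mp ht).1).trans
    (Nat.mul_le_mul_left _ (card_image_corePart_le hc₃ s r))
  have hdiv : ((2 ^ weightSum s * weightedProd s Xs * (2 ^ weightSum s * weightedProd s Ys) / γ
      : ℕ) : ℝ) ≤ (2 ^ weightSum s) ^ 3 * (weightedProd s Xs * weightedProd s Ys *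
        weightedProd s Zs) / X := by
    refine Nat.cast_div_le.trans ?_
    rw [div_le_div_iff₀ hγ hX]
    push_cast
    have := mul_le_mul_of_nonneg_left hγX (by positivity : (0 : ℝ) ≤
      2 ^ weightSum s * weightedProd s Xs * (2 ^ weightSum s * weightedProd s Ys))
    linarith
  calc (#F : ℝ)
      ≤ T ^ 3 * ((2 * ((2 ^ weightSum s * weightedProd s Xs *
          (2 ^ weightSum s * weightedProd s Ys) / γ : ℕ) : ℝ) + 1) * (2 ^ weightSum s + 1)) := by
        exact_mod_cast hcard
    _ ≤ _ := by gcongr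

theorem card_solutions_le {i j : Fin d} (hij : i ≠ j) (hc₁ : 0 < c₁) (hc₂ : 0 < c₂)
    (hc₃ : 0 < c₃) {X : ℝ} (hX : 0 < X)
    (hXM : X ≤ (max (weightedProd univ Xs) (max (weightedProd univ Ys) (weightedProd univ Zs)) : ℕ))
    {T : ℕ} (hT : ∀ t ∈ solutions c₁ c₂ c₃ Xs Ys Zs, #(weightedProd {i, j} t.1).divisors ≤ T ∧
      #(weightedProd {i, j} t.2.1).divisors ≤ T ∧ #(weightedProd {i, j} t.2.2).divisors ≤ T) :
    (#(solutions c₁ c₂ c₃ Xs Ys Zs) : ℝ) ≤ (∏ l ∈ {i, j}ᶜ, Xs l * Ys l * Zs l : ℕ) *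
      (T ^ 3 * ((2 * ((2 ^ weightSum {i, j}) ^ 3 * (weightedProd {i, j} Xs *
        weightedProd {i, j} Ys * weightedProd {i, j} Zs) / X) + 1) *
          (2 ^ weightSum {i, j} + 1))) := by
  rw [card_eq_sum_card_image (restPart {i, j}), Nat.cast_sum]
  refine (sum_le_card_nsmul _ _ _ fun r _ ↦ card_fibre_le hij hc₁ hc₂ hc₃ hX hXM hT r).trans ?_
  rw [nsmul_eq_mul]
  gcongr
  exact_mod_cast card_image_restPart_le _

end Fibres

theorem card_divisors_weightedProd_le {d : ℕ} {c₁ c₂ c₃ : ℕ} {Xs Ys Zs : Fin d → ℕ}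
    {K δ X : ℝ} (hK : ∀ n : ℕ, n ≠ 0 → (#n.divisors : ℝ) ≤ K * (n : ℝ) ^ δ) (hK0 : 0 ≤ K)
    (hδ : 0 ≤ δ)
    (hMX : ((max (weightedProd univ Xs) (max (weightedProd univ Ys) (weightedProd univ Zs)) : ℕ)
      : ℝ) < 2 * X)
    (s : Finset (Fin d)) {t : Triple d} (ht : t ∈ solutions c₁ c₂ c₃ Xs Ys Zs) :
    (#(weightedProd s t.1).divisors : ℝ) ≤ K * (2 ^ (weightSum s + 1) * X) ^ δ ∧
      (#(weightedProd s t.2.1).divisors : ℝ) ≤ K * (2 ^ (weightSum s + 1) * X) ^ δ ∧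
      (#(weightedProd s t.2.2).divisors : ℝ) ≤ K * (2 ^ (weightSum s + 1) * X) ^ δ := by
  have hbound {f Rs : Fin d → ℕ} (hf : f ∈ dyadicBox Rs)
      (hRs : weightedProd univ Rs ≤
        max (weightedProd univ Xs) (max (weightedProd univ Ys) (weightedProd univ Zs))) :
      (#(weightedProd s f).divisors : ℝ) ≤ K * (2 ^ (weightSum s + 1) * X) ^ δ := by
    refine (hK _ (weightedProd_pos (pos_apply_of_mem_dyadicBox hf) _).ne').trans ?_
    gcongr
    calc (weightedProd s f : ℝ)
        ≤ 2 ^ weightSum s * ((max (weightedProd univ Xs) (max (weightedProd univ Ys)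
            (weightedProd univ Zs)) : ℕ) : ℝ) := by
          exact_mod_cast (weightedProd_le_two_pow_mul_weightedProd_univ hf _).trans
            (Nat.mul_le_mul_left _ hRs)
      _ ≤ 2 ^ weightSum s * (2 * X) := by gcongr
      _ = 2 ^ (weightSum s + 1) * X := by ring
  obtain ⟨hx, hy, hz⟩ := mem_dyadicBox_of_mem_solutions ht
  exact ⟨hbound hx (le_max_left _ _), hbound hy ((le_max_left _ _).trans (le_max_right _ _)),
    hbound hz ((le_max_right _ _).trans (le_max_right _ _))⟩

theorem natFloor_mul_rpow_pow_three_le {K a : ℝ} (hK : 0 ≤ K) (ha : 0 ≤ a) (ε : ℝ) :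
    (⌊K * a ^ (ε / 3)⌋₊ : ℝ) ^ 3 ≤ K ^ 3 * a ^ ε :=
  calc (⌊K * a ^ (ε / 3)⌋₊ : ℝ) ^ 3 ≤ (K * a ^ (ε / 3)) ^ 3 := by
        gcongr; exact Nat.floor_le (by positivity)
    _ = K ^ 3 * a ^ ε := by
        rw [mul_pow, ← Real.rpow_mul_natCast ha, Nat.cast_ofNat, div_mul_cancel₀ ε three_ne_zero]

theorem prod_compl_le_of_admissible {d : ℕ} {i j : Fin d} (hij : i ≠ j) {lam X : ℝ}
    {c₁ c₂ c₃ : ℕ} {Xs Ys Zs : Fin d → ℕ} (hadm : Admissible d lam X c₁ c₂ c₃ Xs Ys Zs) :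
    ((∏ l ∈ {i, j}ᶜ, Xs l * Ys l * Zs l : ℕ) : ℝ) ≤
      2 * X ^ lam / (((Xs i * Ys i * Zs i) * (Xs j * Ys j * Zs j) : ℕ) : ℝ) := by
  obtain ⟨-, -, -, hXs, hYs, hZs, -, hN, -⟩ := hadm
  have hP (l : Fin d) : 0 < Xs l * Ys l * Zs l := Nat.mul_pos (Nat.mul_pos (hXs l) (hYs l)) (hZs l)
  rw [le_div_iff₀ (Nat.cast_pos.mpr (Nat.mul_pos (hP i) (hP j))), ← Nat.cast_mul,
    ← prod_pair (f := fun l ↦ Xs l * Ys l * Zs l) hij, prod_compl_mul_prod]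
  exact hN.le

theorem improved_geometry_bound_of_ne {d : ℕ} {i j : Fin d} (hij : i ≠ j) {ε : ℝ}
    (hε : 0 < ε) :
    ∃ C : ℝ, ∀ (lam X : ℝ) (c₁ c₂ c₃ : ℕ) (Xs Ys Zs : Fin d → ℕ), 0 < X →
      Admissible d lam X c₁ c₂ c₃ Xs Ys Zs →
      (B d c₁ c₂ c₃ Xs Ys Zs : ℝ) ≤
        C * (X ^ (lam + ε) / (((Xs i * Ys i * Zs i) * (Xs j * Ys j * Zs j) : ℕ) : ℝ)
          + X ^ (lam - 1 + ε) * (weightedProd {i, j} (fun l ↦ Xs l * Ys l * Zs l) : ℕ) /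
            (((Xs i * Ys i * Zs i) * (Xs j * Ys j * Zs j) : ℕ) : ℝ)) := by
  obtain ⟨K, hK⟩ := card_divisors_le_mul_rpow (δ := ε / 3) (by positivity)
  have hK0 : 0 ≤ K := by have := hK 1 one_ne_zero; norm_num at this; linarith
  set k := weightSum ({i, j} : Finset (Fin d))
  refine ⟨4 * (2 ^ k) ^ 3 * (2 ^ k + 1) * (K ^ 3 * (2 ^ (k + 1)) ^ ε), ?_⟩
  intro lam X c₁ c₂ c₃ Xs Ys Zs hX hadm
  have hR := prod_compl_le_of_admissible hij hadm
  obtain ⟨hc₁, hc₂, hc₃, -, -, -, -, -, hXM, hMX⟩ := hadm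
  set T := ⌊K * (2 ^ (k + 1) * X) ^ (ε / 3)⌋₊
  have hT (t) (ht : t ∈ solutions c₁ c₂ c₃ Xs Ys Zs) :
      #(weightedProd {i, j} t.1).divisors ≤ T ∧ #(weightedProd {i, j} t.2.1).divisors ≤ T ∧
        #(weightedProd {i, j} t.2.2).divisors ≤ T := by
    obtain ⟨h₁, h₂, h₃⟩ := card_divisors_weightedProd_le hK hK0 (by positivity) hMX {i, j} ht
    exact ⟨Nat.le_floor h₁, Nat.le_floor h₂, Nat.le_floor h₃⟩
  have hT3 : (T : ℝ) ^ 3 ≤ K ^ 3 * (2 ^ (k + 1)) ^ ε * X ^ ε := by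
    rw [mul_assoc, ← Real.mul_rpow (by positivity) hX.le]
    exact natFloor_mul_rpow_pow_three_le hK0 (by positivity) ε
  set Q : ℝ := (((Xs i * Ys i * Zs i) * (Xs j * Ys j * Zs j) : ℕ) : ℝ)
  set W : ℝ := (weightedProd {i, j} Xs : ℝ) * weightedProd {i, j} Ys * weightedProd {i, j} Zs
  have hXlam : X ^ (lam - 1 + ε) = X ^ lam * X ^ ε / X := by
    rw [sub_add_eq_add_sub, Real.rpow_sub hX, Real.rpow_one, Real.rpow_add hX]
  have h8k : (1 : ℝ) ≤ (2 ^ k) ^ 3 := one_le_pow₀ (one_le_pow₀ one_le_two)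
  rw [B_eq_card_solutions, Real.rpow_add hX, hXlam, weightedProd_mul, weightedProd_mul,
    Nat.cast_mul, Nat.cast_mul]
  calc (#(solutions c₁ c₂ c₃ Xs Ys Zs) : ℝ)
      ≤ (∏ l ∈ {i, j}ᶜ, Xs l * Ys l * Zs l : ℕ) *
          (T ^ 3 * ((2 * ((2 ^ k) ^ 3 * W / X) + 1) * (2 ^ k + 1))) :=
        card_solutions_le hij hc₁ hc₂ hc₃ hX hXM hT
    _ ≤ 2 * X ^ lam / Q * (K ^ 3 * (2 ^ (k + 1)) ^ ε * X ^ ε *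
          ((2 * ((2 ^ k) ^ 3 * W / X) + 1) * (2 ^ k + 1))) := by gcongr
    _ = 2 * (X ^ lam * X ^ ε / Q) * (K ^ 3 * (2 ^ (k + 1)) ^ ε) * (2 ^ k + 1) *
          (2 * (2 ^ k) ^ 3 * (W / X) + 1) := by ring
    _ ≤ 2 * (X ^ lam * X ^ ε / Q) * (K ^ 3 * (2 ^ (k + 1)) ^ ε) * (2 ^ k + 1) *
          (2 * (2 ^ k) ^ 3 * (W / X) + 2 * (2 ^ k) ^ 3) := by gcongr; linarith
    _ = _ := by ring

theorem improved_geometry_bound_cubic (d : ℕ) (hd : 3 ≤ d) (ε : ℝ) (hε : 0 < ε) :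
    ∃ C : ℝ, ∀ (lam X : ℝ) (c₁ c₂ c₃ : ℕ) (Xs Ys Zs : Fin d → ℕ),
      0 < lam → 1 ≤ X → Admissible d lam X c₁ c₂ c₃ Xs Ys Zs →
      (B d c₁ c₂ c₃ Xs Ys Zs : ℝ) ≤
        C * (X ^ (lam + ε) /
            (((Xs ⟨0, by omega⟩ * Ys ⟨0, by omega⟩ * Zs ⟨0, by omega⟩) *
              (Xs ⟨2, by omega⟩ * Ys ⟨2, by omega⟩ * Zs ⟨2, by omega⟩) : ℕ) : ℝ)
          + X ^ (lam - 1 + ε) *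
            ((Xs ⟨2, by omega⟩ * Ys ⟨2, by omega⟩ * Zs ⟨2, by omega⟩ : ℕ) : ℝ) ^ 2) := by
  obtain ⟨C, hC⟩ :=
    improved_geometry_bound_of_ne (d := d) (i := ⟨0, by omega⟩) (j := ⟨2, by omega⟩) (by simp) hε
  refine ⟨C, fun lam X c₁ c₂ c₃ Xs Ys Zs _ hX hadm ↦
    (hC lam X c₁ c₂ c₃ Xs Ys Zs (by linarith) hadm).trans_eq ?_⟩
  obtain ⟨-, -, -, hXs, hYs, hZs, -⟩ := hadm
  have hne (l : Fin d) : (Xs l : ℝ) ≠ 0 ∧ (Ys l : ℝ) ≠ 0 ∧ (Zs l : ℝ) ≠ 0 :=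
    ⟨by exact_mod_cast (hXs l).ne', by exact_mod_cast (hYs l).ne', by exact_mod_cast (hZs l).ne'⟩
  obtain ⟨h₁, h₂, h₃⟩ := hne ⟨0, by omega⟩
  obtain ⟨h₄, h₅, h₆⟩ := hne ⟨2, by omega⟩
  rw [weightedProd, prod_pair (by simp)]
  push_cast
  field_simp
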